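/- If T(G;x,y)=T(H;x,y) for simple graphs G, H with the same number of vertices and both connected, then G and H have the same number of cycles of each length g where g is the minimum girth of G and H. -/

import Mathlib

open MvPolynomial

/-- The (spanning) rank of an edge set `A`. -/
noncomputable def spanRank (V : Type*) [Fintype V] (A : Set (Sym2 V)) : ℕ :=
  Fintype.card V - Nat.card (SimpleGraph.fromEdgeSet A).ConnectedComponent

/-- The Tutte polynomial `T(G;x,y) = Σ_{A⊆E}(x-1)^{r(E)-r(A)}(y-1)^{|A|-r(A)}`. -/
noncomputable def tuttePoly {V : Type*} [Fintype V] [DecidableEq V]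
    (G : SimpleGraph V) [DecidableRel G.Adj] : MvPolynomial (Fin 2) ℤ :=
  ∑ A ∈ G.edgeFinset.powerset,
    (X 0 - 1) ^ (spanRank V (↑G.edgeFinset : Set (Sym2 V)) - spanRank V (↑A : Set (Sym2 V)))
      * (X 1 - 1) ^ (A.card - spanRank V (↑A : Set (Sym2 V)))

/-- `c` is the edge set of a cycle of the graph `G`. -/
def IsCycleSet {V : Type*} [DecidableEq V] (G : SimpleGraph V) (c : Finset (Sym2 V)) : Prop :=
  ∃ (v : V) (w : G.Walk v v), w.IsCycle ∧ c = w.edges.toFinset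

open SimpleGraph

section Helpers

variable {V : Type*} [Fintype V] [DecidableEq V]

private lemma card_cc_le (G : SimpleGraph V) :
    Nat.card G.ConnectedComponent ≤ Fintype.card V := by
  rw [← Nat.card_eq_fintype_card]
  exact Nat.card_le_card_of_surjective (G.connectedComponentMk) Quot.mk_surjective

private lemma card_cc_pos [Nonempty V] (G : SimpleGraph V) :
    0 < Nat.card G.ConnectedComponent := by
  have : Nonempty G.ConnectedComponent := ⟨G.connectedComponentMk (Classical.arbitrary V)⟩
  exact Nat.card_pos

/-- For a cycle `w`, the number of vertices in its support (counted via tail). -/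
private lemma cycle_support_toFinset_card {G : SimpleGraph V} {a : V}
    {w : G.Walk a a} (hw : w.IsCycle) : w.support.toFinset.card = w.length := by
  have htail : w.support = a :: w.support.tail := w.support_eq_cons
  have hlen : w.support.tail.length = w.length := by
    have := w.length_support
    rw [htail] at this
    simpa using this
  have htne : w.support.tail ≠ [] := by
    intro h
    have h3 := hw.three_le_length
    rw [h, List.length_nil] at hlen
    omega
  have ha : a ∈ w.support.tail := by
    have h1 : w.support.getLast? = some a := by
      rw [List.getLast?_eq_getLast w.support_ne_nil, w.getLast_support]
    rw [htail] at h1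
    rw [List.getLast?_eq_getLast (List.cons_ne_nil _ _), List.getLast_cons htne] at h1
    have h2 : w.support.tail.getLast htne = a := Option.some_inj.mp h1
    have h3 := List.getLast_mem htne
    rwa [h2] at h3
  have : w.support.toFinset = w.support.tail.toFinset := by
    rw [htail, List.toFinset_cons, List.tail_cons, Finset.insert_eq_self.2 (List.mem_toFinset.2 ha)]
  rw [this, List.toFinset_card_of_nodup hw.support_nodup, hlen]

private lemma cycle_length_le_card {G : SimpleGraph V} {a : V}
    {w : G.Walk a a} (hw : w.IsCycle) : w.length ≤ Fintype.card V := by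
  have := cycle_support_toFinset_card hw
  rw [← this]
  exact Finset.card_le_univ _

end Helpers

section CycleRank

variable {V : Type*} [Fintype V] [DecidableEq V]

private lemma spanRank_cycleSet {G : SimpleGraph V} {a : V}
    {w : G.Walk a a} (hw : w.IsCycle) :
    spanRank V (↑w.edges.toFinset : Set (Sym2 V)) = w.length - 1 := by
  classical
  have hset : (↑w.edges.toFinset : Set (Sym2 V)) = {e | e ∈ w.edges} := by
    ext e; simp
  set G' : SimpleGraph V := fromEdgeSet {e | e ∈ w.edges} with hG'
  have hsupedge : ∀ {x y : V}, G'.Adj x y → x ∈ w.support := by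
    intro x y h
    rw [hG', fromEdgeSet_adj] at h
    exact w.fst_mem_support_of_mem_edges h.1
  have hisol : ∀ (x y : V), G'.Reachable x y → x ∉ w.support → y = x := by
    intro x y h hx
    obtain ⟨p⟩ := h
    cases p with
    | nil => rfl
    | cons h q => exact absurd (hsupedge h) hx
  have hedges : ∀ e ∈ w.edges, e ∈ G'.edgeSet := by
    intro e he
    rw [hG', edgeSet_fromEdgeSet]
    exact ⟨he, G.not_isDiag_of_mem_edgeSet (w.edges_subset_edgeSet he)⟩
  have hreach : ∀ x ∈ w.support, G'.Reachable a x := by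
    intro x hx
    have hx' : x ∈ (w.transfer G' hedges).support := by
      rw [Walk.support_transfer]; exact hx
    exact ⟨(w.transfer G' hedges).takeUntil x hx'⟩
  let f : V → ({u : V // u ∉ w.support} ⊕ Unit) := fun u =>
    if h : u ∈ w.support then Sum.inr () else Sum.inl ⟨u, h⟩
  have hf : ∀ x y : V, G'.Reachable x y → f x = f y := by
    intro x y hxy
    by_cases hx : x ∈ w.support
    · by_cases hy : y ∈ w.support
      · simp [f, hx, hy]
      · exact absurd ((hisol y x hxy.symm hy) ▸ hx) hy
    · have h := hisol x y hxy hx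
      subst h; rfl
  let e : G'.ConnectedComponent ≃ ({u : V // u ∉ w.support} ⊕ Unit) :=
    { toFun := Quot.lift f (fun x y h => hf x y h)
      invFun := Sum.elim (fun u => G'.connectedComponentMk u.1)
        (fun _ => G'.connectedComponentMk a)
      left_inv := by
        refine ConnectedComponent.ind ?_
        intro v
        by_cases hv : v ∈ w.support
        · show Sum.elim _ _ (f v) = _
          simp only [f, dif_pos hv, Sum.elim_inr]
          exact ConnectedComponent.sound (hreach v hv)
        · show Sum.elim _ _ (f v) = _
          simp only [f, dif_neg hv, Sum.elim_inl]
      right_inv := by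
        rintro (⟨u, hu⟩ | ⟨⟩)
        · show f u = _
          simp only [f, dif_neg hu]
        · show f a = _
          simp only [f, dif_pos w.start_mem_support] }
  have hcard1 : Nat.card {u : V // u ∉ w.support} = Fintype.card V - w.length := by
    rw [Nat.card_eq_fintype_card, Fintype.card_subtype_compl]
    congr 1
    rw [← cycle_support_toFinset_card hw]
    exact Fintype.card_of_subtype _ (fun x => by simp)
  have hcc : Nat.card G'.ConnectedComponent = (Fintype.card V - w.length) + 1 := by
    rw [Nat.card_congr e, Nat.card_sum, hcard1]
    simp
  have hle : w.length ≤ Fintype.card V := cycle_length_le_card hw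
  have h3 := hw.three_le_length
  unfold spanRank
  rw [hset, ← hG', hcc]
  omega

end CycleRank

section Forest

variable {V : Type*} [Fintype V] [DecidableEq V]

private lemma card_cc_lt {G G' : SimpleGraph V} (hle : G ≤ G') {u v : V}
    (hnr : ¬ G.Reachable u v) (hr : G'.Reachable u v) :
    Nat.card G'.ConnectedComponent < Nat.card G.ConnectedComponent := by
  classical
  letI : Fintype G.ConnectedComponent := Fintype.ofFinite _
  letI : Fintype G'.ConnectedComponent := Fintype.ofFinite _
  rw [Nat.card_eq_fintype_card, Nat.card_eq_fintype_card]
  refine Fintype.card_lt_of_surjective_not_injective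
    (ConnectedComponent.map (Hom.ofLE hle)) ?_ ?_
  · intro c
    refine ConnectedComponent.ind (fun x => ?_) c
    exact ⟨G.connectedComponentMk x, rfl⟩
  · intro hinj
    have h1 : (G.connectedComponentMk u).map (Hom.ofLE hle)
        = (G.connectedComponentMk v).map (Hom.ofLE hle) := by
      simp only [ConnectedComponent.map_mk]
      exact ConnectedComponent.sound hr
    exact hnr (ConnectedComponent.eq.mp (hinj h1))

private lemma forest_bound :
    ∀ (A : Finset (Sym2 V)), (∀ e ∈ A, ¬ e.IsDiag) →
      (fromEdgeSet (↑A : Set (Sym2 V))).IsAcyclic →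
      A.card + Nat.card (fromEdgeSet (↑A : Set (Sym2 V))).ConnectedComponent
        ≤ Fintype.card V := by
  intro A
  induction A using Finset.induction_on with
  | empty =>
    intro _ _
    simpa using card_cc_le (fromEdgeSet ((↑(∅ : Finset (Sym2 V))) : Set (Sym2 V)))
  | @insert e B he ih =>
    intro hdiag hacyc
    induction e using Sym2.ind with
    | _ u v =>
    have hne : u ≠ v := by
      intro h
      exact hdiag _ (Finset.mem_insert_self _ _) (by simp [h])
    have hsub : (↑B : Set (Sym2 V)) ⊆ (↑(insert s(u,v) B) : Set (Sym2 V)) := by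
      intro x hx; simp only [Finset.coe_insert, Set.mem_insert_iff]; right; exact hx
    have hle : fromEdgeSet (↑B : Set (Sym2 V)) ≤ fromEdgeSet (↑(insert s(u,v) B) : Set (Sym2 V)) :=
      fromEdgeSet_mono hsub
    have hBacyc : (fromEdgeSet (↑B : Set (Sym2 V))).IsAcyclic := by
      intro x p hp
      exact hacyc (p.mapLe hle) (hp.mapLe hle)
    have hBdiag : ∀ e ∈ B, ¬ e.IsDiag := fun e' h' => hdiag e' (Finset.mem_insert_of_mem h')
    have hnr : ¬ (fromEdgeSet (↑B : Set (Sym2 V))).Reachable u v := by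
      intro hr
      obtain ⟨q⟩ := hr.symm
      set p := q.toPath with hp
      have hmem : ∀ e' ∈ (p : (fromEdgeSet (↑B : Set (Sym2 V))).Walk v u).edges,
          e' ∈ (fromEdgeSet (↑(insert s(u,v) B) : Set (Sym2 V))).edgeSet := by
        intro e' he'
        exact edgeSet_mono hle ((p : (fromEdgeSet (↑B : Set (Sym2 V))).Walk v u).edges_subset_edgeSet he')
      set p' : (fromEdgeSet (↑(insert s(u,v) B) : Set (Sym2 V))).Walk v u :=
        (p : (fromEdgeSet (↑B : Set (Sym2 V))).Walk v u).transfer _ hmem with hp'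
      have hp'path : p'.IsPath := p.prop.transfer hmem
      have hadj : (fromEdgeSet (↑(insert s(u,v) B) : Set (Sym2 V))).Adj u v := by
        rw [fromEdgeSet_adj]
        exact ⟨by simp, hne⟩
      have hnotmem : s(u,v) ∉ p'.edges := by
        rw [hp', Walk.edges_transfer]
        intro hmem'
        have := (p : (fromEdgeSet (↑B : Set (Sym2 V))).Walk v u).edges_subset_edgeSet hmem'
        rw [edgeSet_fromEdgeSet] at this
        exact he (by simpa using this.1)
      exact hacyc _ (Path.cons_isCycle ⟨p', hp'path⟩ hadj hnotmem)
    have hr : (fromEdgeSet (↑(insert s(u,v) B) : Set (Sym2 V))).Reachable u v := by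
      refine Adj.reachable ?_
      rw [fromEdgeSet_adj]
      exact ⟨by simp, hne⟩
    have hlt := card_cc_lt hle hnr hr
    have hih := ih hBdiag hBacyc
    rw [Finset.card_insert_of_notMem he]
    omega

end Forest

section Count

variable {V : Type*} [Fintype V] [DecidableEq V]

private lemma spanRank_full (G : SimpleGraph V) [DecidableRel G.Adj] (h : G.Connected) :
    spanRank V (↑G.edgeFinset : Set (Sym2 V)) = Fintype.card V - 1 := by
  unfold spanRank
  have heq : fromEdgeSet (↑G.edgeFinset : Set (Sym2 V)) = G := by
    rw [coe_edgeFinset, fromEdgeSet_edgeSet]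
  rw [heq]
  have h1 : Nat.card G.ConnectedComponent = 1 := by
    rw [Nat.card_eq_one_iff_unique]
    refine ⟨⟨ConnectedComponent.ind₂ fun x y => ConnectedComponent.sound (h.preconnected x y)⟩,
      ⟨G.connectedComponentMk h.nonempty.some⟩⟩
  rw [h1]

private lemma count_eq (G : SimpleGraph V) [DecidableRel G.Adj]
    (g : ℕ) (hg3 : 3 ≤ g) (hgirth : ∀ (a : V) (w : G.Walk a a), w.IsCycle → g ≤ w.length) :
    Nat.card {c : Finset (Sym2 V) // IsCycleSet G c ∧ c.card = g} =
      (G.edgeFinset.powerset.filter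
        (fun (A : Finset (Sym2 V)) => spanRank V (↑A : Set (Sym2 V)) = g - 1 ∧ A.card = g)).card := by
  classical
  have hiff : ∀ c : Finset (Sym2 V), (IsCycleSet G c ∧ c.card = g) ↔
      c ∈ G.edgeFinset.powerset.filter
        (fun (A : Finset (Sym2 V)) => spanRank V (↑A : Set (Sym2 V)) = g - 1 ∧ A.card = g) := by
    intro c
    rw [Finset.mem_filter, Finset.mem_powerset]
    constructor
    · rintro ⟨⟨v, w, hw, rfl⟩, hcard⟩
      have hlen : w.length = g := by
        rw [← hcard, List.toFinset_card_of_nodup hw.isCircuit.isTrail.edges_nodup,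
          Walk.length_edges]
      refine ⟨?_, ?_, hcard⟩
      · intro e he
        rw [List.mem_toFinset] at he
        exact mem_edgeFinset.mpr (w.edges_subset_edgeSet he)
      · rw [spanRank_cycleSet hw, hlen]
    · rintro ⟨hmem, hrank, hcard⟩
      have hsub : (↑c : Set (Sym2 V)) ⊆ G.edgeSet := by
        intro e he
        exact mem_edgeFinset.mp (hmem he)
      have hdiag : ∀ e ∈ c, ¬ e.IsDiag := fun e h' =>
        G.not_isDiag_of_mem_edgeSet (hsub h')
      have hccle := card_cc_le (fromEdgeSet (↑c : Set (Sym2 V)))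
      have hnacyc : ¬ (fromEdgeSet (↑c : Set (Sym2 V))).IsAcyclic := by
        intro hacyc
        have hb := forest_bound c hdiag hacyc
        unfold spanRank at hrank
        omega
      simp only [IsAcyclic, not_forall, not_not] at hnacyc
      obtain ⟨v, p, hp⟩ := hnacyc
      have hpe : ∀ e ∈ p.edges, e ∈ (↑c : Set (Sym2 V)) := by
        intro e he
        have := p.edges_subset_edgeSet he
        rw [edgeSet_fromEdgeSet] at this
        exact this.1
      have hmemG : ∀ e ∈ p.edges, e ∈ G.edgeSet := fun e he => hsub (hpe e he)
      set p' : G.Walk v v := p.transfer G hmemG with hp'def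
      have hp' : p'.IsCycle := hp.transfer hmemG
      have hlen : g ≤ p'.length := hgirth v p' hp'
      have hsubc : p'.edges.toFinset ⊆ c := by
        intro e he
        rw [List.mem_toFinset, hp'def, Walk.edges_transfer] at he
        exact hpe e he
      have hcardle : c.card ≤ p'.edges.toFinset.card := by
        rw [List.toFinset_card_of_nodup hp'.isCircuit.isTrail.edges_nodup, Walk.length_edges,
          hcard]
        exact hlen
      have heq := Finset.eq_of_subset_of_card_le hsubc hcardle
      exact ⟨⟨v, p', hp', heq.symm⟩, hcard⟩
  have := Nat.card_congr (Equiv.subtypeEquivRight hiff)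
  rw [this]
  exact Nat.card_eq_finsetCard _

end Count

section Poly

private lemma single_pair_eq {a b c d : ℕ} :
    Finsupp.single (0 : Fin 2) a + Finsupp.single (1 : Fin 2) b
      = Finsupp.single (0 : Fin 2) c + Finsupp.single (1 : Fin 2) d ↔ a = c ∧ b = d := by
  constructor
  · intro h
    constructor
    · have h0 := DFunLike.congr_fun h (0 : Fin 2)
      simpa [Finsupp.single_apply] using h0
    · have h1 := DFunLike.congr_fun h (1 : Fin 2)
      simpa [Finsupp.single_apply] using h1
  · rintro ⟨rfl, rfl⟩; rfl

variable {V : Type*} [Fintype V] [DecidableEq V]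

private lemma coeff_tutte (G : SimpleGraph V) [DecidableRel G.Adj] (hconn : G.Connected)
    (g : ℕ) (hg1 : 1 ≤ g) (hgn : g ≤ Fintype.card V) :
    MvPolynomial.coeff
        (Finsupp.single (0 : Fin 2) (Fintype.card V - g) + Finsupp.single (1 : Fin 2) 1)
        (aeval (fun i : Fin 2 => (X i + 1 : MvPolynomial (Fin 2) ℤ)) (tuttePoly G))
      = ((G.edgeFinset.powerset.filter
          (fun (A : Finset (Sym2 V)) =>
            spanRank V (↑A : Set (Sym2 V)) = g - 1 ∧ A.card = g)).card : ℤ) := by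
  classical
  have hV : Nonempty V := hconn.nonempty
  have hn1 : 1 ≤ Fintype.card V := Fintype.card_pos
  have hrle : ∀ A : Finset (Sym2 V),
      spanRank V (↑A : Set (Sym2 V)) ≤ Fintype.card V - 1 := by
    intro A
    have := card_cc_pos (fromEdgeSet (↑A : Set (Sym2 V)))
    unfold spanRank
    omega
  rw [tuttePoly, map_sum, spanRank_full G hconn]
  have hterm : ∀ A : Finset (Sym2 V),
      (aeval (fun i : Fin 2 => (X i + 1 : MvPolynomial (Fin 2) ℤ)))
          (((X 0 - 1 : MvPolynomial (Fin 2) ℤ)) ^ ((Fintype.card V - 1) - spanRank V (↑A : Set (Sym2 V)))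
            * ((X 1 - 1 : MvPolynomial (Fin 2) ℤ)) ^ (A.card - spanRank V (↑A : Set (Sym2 V))))
        = monomial
            (Finsupp.single (0 : Fin 2) ((Fintype.card V - 1) - spanRank V (↑A : Set (Sym2 V)))
              + Finsupp.single (1 : Fin 2) (A.card - spanRank V (↑A : Set (Sym2 V)))) (1 : ℤ) := by
    intro A
    simp only [map_mul, map_pow, map_sub, aeval_X, map_one, add_sub_cancel_right,
      X_pow_eq_monomial, monomial_mul, mul_one]
  rw [Finset.sum_congr rfl (fun A _ => hterm A)]
  rw [MvPolynomial.coeff_sum]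
  have hco : ∀ A : Finset (Sym2 V), A ∈ G.edgeFinset.powerset →
      MvPolynomial.coeff
          (Finsupp.single (0 : Fin 2) (Fintype.card V - g) + Finsupp.single (1 : Fin 2) 1)
          (monomial
            (Finsupp.single (0 : Fin 2) ((Fintype.card V - 1) - spanRank V (↑A : Set (Sym2 V)))
              + Finsupp.single (1 : Fin 2) (A.card - spanRank V (↑A : Set (Sym2 V)))) (1 : ℤ))
        = if spanRank V (↑A : Set (Sym2 V)) = g - 1 ∧ A.card = g then 1 else 0 := by
    intro A _
    rw [MvPolynomial.coeff_monomial]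
    have h := hrle A
    by_cases hcond : spanRank V (↑A : Set (Sym2 V)) = g - 1 ∧ A.card = g
    · obtain ⟨h1, h2⟩ := hcond
      rw [if_pos (single_pair_eq.mpr ⟨by omega, by omega⟩), if_pos ⟨h1, h2⟩]
    · rw [if_neg, if_neg hcond]
      intro hc
      obtain ⟨h1, h2⟩ := single_pair_eq.mp hc
      exact hcond ⟨by omega, by omega⟩
  rw [Finset.sum_congr rfl hco]
  rw [Finset.sum_boole]

end Poly

private lemma girth_le_length {α : Type*} {G : SimpleGraph α} {a : α} {w : G.Walk a a}
    (hw : w.IsCycle) : G.girth ≤ w.length := by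
  have h : G.egirth ≤ (w.length : ℕ∞) := by
    rw [SimpleGraph.egirth]
    exact iInf_le_of_le a (iInf_le_of_le w (iInf_le _ hw))
  have h2 := ENat.toNat_le_toNat h (by simp)
  simpa [SimpleGraph.girth] using h2

/-- If `G` and `H` are connected simple graphs with the same number of vertices and equal
Tutte polynomials, then they have the same number of cycles of length `g`, where `g` is
the minimum of the girths of `G` and `H`. -/
theorem stmt16 {V W : Type*} [Fintype V] [DecidableEq V] [Fintype W] [DecidableEq W]
    (G : SimpleGraph V) [DecidableRel G.Adj] (H : SimpleGraph W) [DecidableRel H.Adj]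
    (hGconn : G.Connected) (hHconn : H.Connected)
    (hcard : Fintype.card V = Fintype.card W)
    (hT : tuttePoly G = tuttePoly H) :
    ∀ g : ℕ, (g : ℕ∞) = min G.girth H.girth →
      Nat.card {c : Finset (Sym2 V) // IsCycleSet G c ∧ c.card = g} =
      Nat.card {c : Finset (Sym2 W) // IsCycleSet H c ∧ c.card = g} := by
  classical
  intro g hg
  by_cases hg3 : 3 ≤ g
  · -- main case
    have hmin : g = min G.girth H.girth := by exact_mod_cast hg
    have hgG : g ≤ G.girth := hmin ▸ min_le_left _ _
    have hgH : g ≤ H.girth := hmin ▸ min_le_right _ _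
    have hgn : g ≤ Fintype.card V := by
      rcases min_choice G.girth H.girth with hc | hc
      · have hgg : G.girth = g := by omega
        have hnac : ¬ G.IsAcyclic := by
          intro h
          rw [h.girth_eq_zero] at hgg; omega
        obtain ⟨a, w, hw, hlen⟩ := SimpleGraph.exists_girth_eq_length.mpr hnac
        have hle := cycle_length_le_card hw
        omega
      · have hgg : H.girth = g := by omega
        have hnac : ¬ H.IsAcyclic := by
          intro h
          rw [h.girth_eq_zero] at hgg; omega
        obtain ⟨a, w, hw, hlen⟩ := SimpleGraph.exists_girth_eq_length.mpr hnac
        have hle := cycle_length_le_card hw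
        omega
    have e1 := count_eq G g hg3
      (fun a w hw => le_trans hgG (_root_.girth_le_length hw))
    have e2 := count_eq H g hg3
      (fun a w hw => le_trans hgH (_root_.girth_le_length hw))
    have hc1 := coeff_tutte G hGconn g (by omega) hgn
    have hc2 := coeff_tutte H hHconn g (by omega) (hcard ▸ hgn)
    have hTc := congrArg (fun p => MvPolynomial.coeff
        (Finsupp.single (0 : Fin 2) (Fintype.card V - g) + Finsupp.single (1 : Fin 2) 1)
        (aeval (fun i : Fin 2 => (X i + 1 : MvPolynomial (Fin 2) ℤ)) p)) hT
    rw [hc1, hcard, hc2] at hTc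
    rw [e1, e2]
    exact_mod_cast hTc
  · -- no cycles of length `g < 3` at all
    have h1 : Nat.card {c : Finset (Sym2 V) // IsCycleSet G c ∧ c.card = g} = 0 := by
      rw [Nat.card_eq_zero]
      left
      constructor
      rintro ⟨c, ⟨v, w, hw, rfl⟩, hcard'⟩
      have h3 := hw.three_le_length
      rw [List.toFinset_card_of_nodup hw.isCircuit.isTrail.edges_nodup,
        Walk.length_edges] at hcard'
      omega
    have h2 : Nat.card {c : Finset (Sym2 W) // IsCycleSet H c ∧ c.card = g} = 0 := by
      rw [Nat.card_eq_zero]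
      left
      constructor
      rintro ⟨c, ⟨v, w, hw, rfl⟩, hcard'⟩
      have h3 := hw.three_le_length
      rw [List.toFinset_card_of_nodup hw.isCircuit.isTrail.edges_nodup,
        Walk.length_edges] at hcard'
      omega
    rw [h1, h2]
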